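/- arXiv:1509.03737 — 5 statements merged into one kernel-verified Lean document; each statement's English description precedes it below -/
import Mathlib

section
/- Let Z follow a noncentral chi-squared distribution with ν degrees of freedom and noncentrality parameter ρ. Then for every x ≥ 0, P(Z ≤ ρ + ν − 2√((ν+2ρ)x)) ≤ e^{−x}. Consequently, for any threshold θ ≤ ρ + ν, P(Z ≤ θ) ≤ exp(−(ν+ρ−θ)²/(4(ν+2ρ))). -/
open MeasureTheory ProbabilityTheory

/-- `Z` follows a noncentral chi-squared distribution with `ν` degrees of freedom and
noncentrality `ρ` (under `μ`): `Z` is the squared norm of a `ν`-dimensional Gaussian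
vector with identity covariance whose mean has squared norm `ρ`. -/
def IsNoncentralChiSq {Ω : Type*} [MeasurableSpace Ω] (μ : Measure Ω)
    (Z : Ω → ℝ) (ρ : ℝ) (ν : ℕ) : Prop :=
  ∃ (X : Ω → Fin ν → ℝ) (m : Fin ν → ℝ),
    iIndepFun (fun i ω => X ω i) μ ∧
    (∀ i, μ.map (fun ω => X ω i) = gaussianReal (m i) 1) ∧
    ρ = ∑ i, m i ^ 2 ∧
    ∀ ω, Z ω = ∑ i, X ω i ^ 2

/-! Chernoff bound on the left tail. For `X ∼ N(m, 1)` and `t < 1/2`,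
`E exp (t X²) = exp (t m² / (1 - 2t)) / √(1 - 2t)`; for `t ≤ 0` the estimates
`t / (1 - 2t) ≤ t + 2t²` and `log (1 - 2t) ≥ -2 (t + t²)` turn the product of these over the
coordinates into the sub-gamma bound `E exp (t Z) ≤ exp (t (ρ + ν) + t² (ν + 2ρ))`.
Markov's inequality at the optimal `t = -(ν + ρ - θ) / (2 (ν + 2ρ))` gives the bound at threshold
`θ`, and `θ = ρ + ν - 2 √((ν + 2ρ) x)` turns it into `e^{-x}`. -/

open Real

lemma Real.exp_neg_add_sq_le_sqrt_one_sub_two_mul {t : ℝ} (ht : t ≤ 0) :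
    exp (-(t + t ^ 2)) ≤ √(1 - 2 * t) := by
  have hlog := le_log_one_add_of_nonneg (x := -2 * t) (by linarith)
  rw [show 1 + -2 * t = 1 - 2 * t by ring] at hlog
  have hquad : -2 * (t + t ^ 2) ≤ 2 * (-2 * t) / (-2 * t + 2) := by
    rw [le_div_iff₀ (by linarith)]
    nlinarith [mul_nonneg (neg_nonneg.2 ht) (sq_nonneg t)]
  rw [le_sqrt (exp_pos _).le (by linarith), ← exp_nat_mul, ← le_log_iff_exp_le (by linarith)]
  push_cast
  linarith

lemma integral_exp_mul_sq_gaussianReal (m : ℝ) {t : ℝ} (ht : t < 1 / 2) :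
    ∫ x, exp (t * x ^ 2) ∂(gaussianReal m 1) = exp (t * m ^ 2 / (1 - 2 * t)) / √(1 - 2 * t) := by
  have h12t : 0 < 1 - 2 * t := by linarith
  -- completing the square in the exponent of the density
  have hsquare : ∀ x, gaussianPDFReal m 1 x * exp (t * x ^ 2) =
      ((√(2 * π))⁻¹ * exp (t * m ^ 2 / (1 - 2 * t))) *
        exp (-((1 - 2 * t) / 2) * (x - m / (1 - 2 * t)) ^ 2) := by
    intro x
    simp only [gaussianPDFReal, NNReal.coe_one, mul_one, mul_assoc, ← exp_add]
    congr 2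
    field_simp
    ring
  simp only [integral_gaussianReal_eq_integral_smul one_ne_zero, smul_eq_mul, hsquare,
    integral_const_mul, integral_sub_right_eq_self (fun y => exp (-((1 - 2 * t) / 2) * y ^ 2)),
    integral_gaussian]
  rw [show π / ((1 - 2 * t) / 2) = 2 * π / (1 - 2 * t) by field_simp, sqrt_div (by positivity)]
  have : 0 < √(2 * π) := by positivity
  field_simp

lemma mgf_sq_of_map_eq_gaussianReal {Ω : Type*} [MeasurableSpace Ω] {μ : Measure Ω}
    {X : Ω → ℝ} {m t : ℝ} (hX : μ.map X = gaussianReal m 1) (ht : t < 1 / 2) :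
    mgf (fun ω => X ω ^ 2) μ t = exp (t * m ^ 2 / (1 - 2 * t)) / √(1 - 2 * t) := by
  have hXm : AEMeasurable X μ := aemeasurable_of_map_neZero (by rw [hX]; infer_instance)
  rw [← integral_exp_mul_sq_gaussianReal m ht, ← hX,
    integral_map hXm (by fun_prop : Continuous fun x : ℝ => exp (t * x ^ 2)).aestronglyMeasurable]
  rfl

namespace IsNoncentralChiSq

variable {Ω : Type*} [MeasurableSpace Ω] {μ : Measure Ω} {Z : Ω → ℝ} {ρ : ℝ} {ν : ℕ}

lemma noncentrality_nonneg (hZ : IsNoncentralChiSq μ Z ρ ν) : 0 ≤ ρ := by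
  obtain ⟨-, m, -, -, rfl, -⟩ := hZ
  positivity

lemma mgf_eq (hZ : IsNoncentralChiSq μ Z ρ ν) {t : ℝ} (ht : t < 1 / 2) :
    mgf Z μ t = exp (t * ρ / (1 - 2 * t)) / √(1 - 2 * t) ^ ν := by
  obtain ⟨X, m, hindep, hX, rfl, hZX⟩ := hZ
  have hXm : ∀ i, AEMeasurable (fun ω => X ω i) μ :=
    fun i => aemeasurable_of_map_neZero (by rw [hX i]; infer_instance)
  have hZsum : Z = ∑ i, fun ω => X ω i ^ 2 := by
    ext ω
    simp [hZX]
  have hindep_sq : iIndepFun (fun i ω => X ω i ^ 2) μ :=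
    hindep.comp₀ (fun _ x => x ^ 2) hXm fun _ => by fun_prop
  rw [hZsum, hindep_sq.mgf_sum₀ fun i => (hXm i).pow_const 2]
  simp only [mgf_sq_of_map_eq_gaussianReal (hX _) ht, Finset.prod_div_distrib,
    Finset.prod_const, Finset.card_univ, Fintype.card_fin, ← exp_sum, Finset.mul_sum,
    Finset.sum_div]

lemma integrable_exp_mul (hZ : IsNoncentralChiSq μ Z ρ ν) {t : ℝ} (ht : t < 1 / 2) :
    Integrable (fun ω => exp (t * Z ω)) μ := by
  refine Integrable.of_integral_ne_zero (ne_of_gt ?_)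
  rw [← mgf, hZ.mgf_eq ht]
  have : 0 < 1 - 2 * t := by linarith
  positivity

lemma mgf_le (hZ : IsNoncentralChiSq μ Z ρ ν) {t : ℝ} (ht : t ≤ 0) :
    mgf Z μ t ≤ exp (t * (ρ + ν) + t ^ 2 * (ν + 2 * ρ)) := by
  have hρ := hZ.noncentrality_nonneg
  have h12t : 0 < 1 - 2 * t := by linarith
  have hmean : t * ρ / (1 - 2 * t) ≤ t * ρ + 2 * t ^ 2 * ρ := by
    rw [div_le_iff₀ h12t]
    nlinarith [mul_nonneg (mul_nonneg (neg_nonneg.2 ht) (sq_nonneg t)) hρ]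
  have hvar : exp (ν * -(t + t ^ 2)) ≤ √(1 - 2 * t) ^ ν := by
    rw [exp_nat_mul]
    exact pow_le_pow_left₀ (exp_pos _).le (exp_neg_add_sq_le_sqrt_one_sub_two_mul ht) ν
  rw [hZ.mgf_eq (by linarith)]
  calc exp (t * ρ / (1 - 2 * t)) / √(1 - 2 * t) ^ ν
      ≤ exp (t * ρ + 2 * t ^ 2 * ρ) / exp (ν * -(t + t ^ 2)) := by
        gcongr
    _ = exp (t * (ρ + ν) + t ^ 2 * (ν + 2 * ρ)) := by
        rw [← exp_sub]
        ring_nf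

lemma measureReal_le_le_exp [IsFiniteMeasure μ] (hZ : IsNoncentralChiSq μ Z ρ ν) (θ : ℝ)
    {t : ℝ} (ht : t ≤ 0) :
    μ.real {ω | Z ω ≤ θ} ≤ exp (t * (ρ + ν - θ) + t ^ 2 * (ν + 2 * ρ)) := by
  calc μ.real {ω | Z ω ≤ θ} ≤ exp (-t * θ) * mgf Z μ t :=
        measure_le_le_exp_mul_mgf θ ht (hZ.integrable_exp_mul (by linarith))
    _ ≤ exp (-t * θ) * exp (t * (ρ + ν) + t ^ 2 * (ν + 2 * ρ)) := by
        gcongr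
        exact hZ.mgf_le ht
    _ = exp (t * (ρ + ν - θ) + t ^ 2 * (ν + 2 * ρ)) := by
        rw [← exp_add]
        ring_nf

end IsNoncentralChiSq

/-- Left-tail concentration for the noncentral chi-squared distribution
`Z ∼ χ²(ρ, ν)`: for every `x ≥ 0`, `P(Z ≤ ρ + ν − 2√((ν+2ρ)x)) ≤ e^{−x}`, and
consequently, for any threshold `θ ≤ ρ + ν`,
`P(Z ≤ θ) ≤ exp(−(ν+ρ−θ)²/(4(ν+2ρ)))`. -/
theorem stmt_3 {Ω : Type*} [MeasurableSpace Ω] (μ : Measure Ω) [IsProbabilityMeasure μ]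
    (Z : Ω → ℝ) (ρ : ℝ) (ν : ℕ) (hν : 1 ≤ ν)
    (hZ : IsNoncentralChiSq μ Z ρ ν) :
    (∀ x : ℝ, 0 ≤ x →
      μ {ω | Z ω ≤ ρ + ν - 2 * Real.sqrt ((ν + 2 * ρ) * x)}
        ≤ ENNReal.ofReal (Real.exp (-x))) ∧
    (∀ θ : ℝ, θ ≤ ρ + ν →
      μ {ω | Z ω ≤ θ}
        ≤ ENNReal.ofReal (Real.exp (-(ν + ρ - θ) ^ 2 / (4 * (ν + 2 * ρ))))) := by
  have hb : 0 < (ν : ℝ) + 2 * ρ := by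
    have : (1 : ℝ) ≤ ν := by exact_mod_cast hν
    linarith [hZ.noncentrality_nonneg]
  have hthreshold : ∀ θ : ℝ, θ ≤ ρ + ν →
      μ {ω | Z ω ≤ θ} ≤ ENNReal.ofReal (exp (-(ν + ρ - θ) ^ 2 / (4 * (ν + 2 * ρ)))) := by
    intro θ hθ
    have hopt := hZ.measureReal_le_le_exp θ (t := -(ν + ρ - θ) / (2 * (ν + 2 * ρ)))
      (div_nonpos_of_nonpos_of_nonneg (by linarith) (by positivity))
    rw [ENNReal.le_ofReal_iff_toReal_le (measure_ne_top _ _) (exp_pos _).le]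
    refine hopt.trans_eq (congrArg exp ?_)
    field_simp
    ring
  refine ⟨fun x hx => ?_, hthreshold⟩
  have hdev : -(ν + ρ - (ρ + ν - 2 * √((ν + 2 * ρ) * x))) ^ 2 / (4 * (ν + 2 * ρ)) = -x := by
    rw [show ν + ρ - (ρ + ν - 2 * √((ν + 2 * ρ) * x)) = 2 * √((ν + 2 * ρ) * x) by ring, mul_pow,
      sq_sqrt (by positivity)]
    field_simp
    ring
  have := hthreshold (ρ + ν - 2 * √((ν + 2 * ρ) * x)) (by linarith [sqrt_nonneg ((ν + 2 * ρ) * x)])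
  rwa [hdev] at this
end

section
/- Let η ∼ χ²(ν−1) and ζ ∼ χ²(1) be independent, with ν ≥ 2, and let θ_G ≥ θ_V > 0. Then P(η + ζ ≥ θ_G, ζ ≥ θ_V) ≤ C(ν)·e^{−θ_G/2}·θ_G^{ν/2}·(1 − G_β(θ_V/θ_G; 1/2, (ν+1)/2)) + (1 − F₁(θ_G − ν + 1)), where C(ν) = e^{(ν−1)/2} / (√2 (ν−1)^{(ν−1)/2}) · Γ(ν/2 + 1/2)/Γ(ν/2 + 1), G_β(·;a,b) is the CDF of the Beta(a,b) distribution, and F₁ is the CDF of χ²(1). -/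
open MeasureTheory ProbabilityTheory

/-- The CDF of the chi-squared distribution with one degree of freedom. -/
noncomputable def chiSqOneCDF (t : ℝ) : ℝ :=
  (gammaMeasure ((1 : ℝ) / 2) ((1 : ℝ) / 2) (Set.Iic t)).toReal

/-- The CDF of the Beta(a,b) distribution evaluated at `x`. -/
noncomputable def betaCDF (a b x : ℝ) : ℝ :=
  (Real.Gamma (a + b) / (Real.Gamma a * Real.Gamma b)) *
    ∫ t in (0 : ℝ)..x, t ^ (a - 1) * (1 - t) ^ (b - 1)

/-- The constant `C(ν)` of Proposition 2. -/
noncomputable def Cconst (ν : ℕ) : ℝ :=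
  Real.exp (((ν : ℝ) - 1) / 2) / (Real.sqrt 2 * ((ν : ℝ) - 1) ^ (((ν : ℝ) - 1) / 2)) *
    (Real.Gamma ((ν : ℝ) / 2 + 1 / 2) / Real.Gamma ((ν : ℝ) / 2 + 1))

/-! Split the event according to whether `ζ ≥ θ_G - ν + 1`; on that part the bound is the
`χ²(1)` tail. On the rest, condition on `ζ = z`: the Chernoff bound
`P(η ≥ s) ≤ (s / (ν - 1))^((ν-1)/2) e^((ν-1)/2 - s/2)` applies to `s = θ_G - z ≥ ν - 1`, and
integrating it against the `χ²(1)` density gives, after the substitution `z = θ_G u`, a multiple of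
the incomplete Beta integral `∫_{θ_V/θ_G}^1 u^(-1/2) (1 - u)^((ν-1)/2) du`. -/

open Set intervalIntegral

lemma ofReal_betaIntegrand {a b t : ℝ} (ht₀ : 0 ≤ t) (ht₁ : t ≤ 1) :
    (t : ℂ) ^ ((a : ℂ) - 1) * (1 - (t : ℂ)) ^ ((b : ℂ) - 1)
      = ((t ^ (a - 1) * (1 - t) ^ (b - 1) : ℝ) : ℂ) := by
  push_cast
  rw [Complex.ofReal_cpow ht₀, Complex.ofReal_cpow (sub_nonneg.mpr ht₁)]
  push_cast
  ring

lemma intervalIntegrable_betaIntegrand {a b : ℝ} (ha : 0 < a) (hb : 0 < b) :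
    IntervalIntegrable (fun t : ℝ ↦ t ^ (a - 1) * (1 - t) ^ (b - 1)) volume 0 1 := by
  refine (Complex.betaIntegral_convergent (u := a) (v := b) (by simpa) (by simpa)).mono_fun
    (by fun_prop) ?_
  rw [uIoc_of_le zero_le_one]
  filter_upwards [ae_restrict_mem measurableSet_Ioc] with t ht
  rw [ofReal_betaIntegrand ht.1.le ht.2, Complex.norm_real]

lemma integral_betaIntegrand {a b : ℝ} (ha : 0 < a) (hb : 0 < b) :
    ∫ t in (0 : ℝ)..1, t ^ (a - 1) * (1 - t) ^ (b - 1)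
      = Real.Gamma a * Real.Gamma b / Real.Gamma (a + b) := by
  have h := Complex.betaIntegral_eq_Gamma_mul_div a b (by simpa) (by simpa)
  rw [Complex.betaIntegral, integral_congr (g := fun t : ℝ ↦
      ((t ^ (a - 1) * (1 - t) ^ (b - 1) : ℝ) : ℂ)) fun t ht ↦ ?_] at h
  · rw [intervalIntegral.integral_ofReal, ← Complex.ofReal_add, Complex.Gamma_ofReal,
      Complex.Gamma_ofReal, Complex.Gamma_ofReal] at h
    exact_mod_cast h
  · rw [uIcc_of_le zero_le_one] at ht
    exact ofReal_betaIntegrand ht.1 ht.2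

lemma one_sub_betaCDF {a b x : ℝ} (ha : 0 < a) (hb : 0 < b) (hx₀ : 0 ≤ x) (hx₁ : x ≤ 1) :
    1 - betaCDF a b x = Real.Gamma (a + b) / (Real.Gamma a * Real.Gamma b) *
      ∫ t in x..1, t ^ (a - 1) * (1 - t) ^ (b - 1) := by
  have hint := intervalIntegrable_betaIntegrand ha hb
  have hsplit := integral_add_adjacent_intervals
    (hint.mono_set (by rw [uIcc_of_le hx₀, uIcc_of_le zero_le_one]; gcongr))
    (hint.mono_set (by rw [uIcc_of_le hx₁, uIcc_of_le zero_le_one]; gcongr))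
  rw [integral_betaIntegrand ha hb] at hsplit
  have := Real.Gamma_pos_of_pos ha
  have := Real.Gamma_pos_of_pos hb
  have := Real.Gamma_pos_of_pos (add_pos ha hb)
  rw [betaCDF, ← sub_eq_of_eq_add' hsplit.symm]
  field_simp

lemma betaCDF_le_one {a b x : ℝ} (ha : 0 < a) (hb : 0 < b) (hx₀ : 0 ≤ x) (hx₁ : x ≤ 1) :
    betaCDF a b x ≤ 1 := by
  have hint : 0 ≤ ∫ t in x..1, t ^ (a - 1) * (1 - t) ^ (b - 1) :=
    intervalIntegral.integral_nonneg hx₁ fun t ht ↦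
      mul_nonneg (Real.rpow_nonneg (hx₀.trans ht.1) _) (Real.rpow_nonneg (by linarith [ht.2]) _)
  have := Real.Gamma_pos_of_pos ha
  have := Real.Gamma_pos_of_pos hb
  have := Real.Gamma_pos_of_pos (add_pos ha hb)
  have := one_sub_betaCDF ha hb hx₀ hx₁
  have : 0 ≤ 1 - betaCDF a b x := by rw [this]; positivity
  linarith

lemma integral_rpow_mul_sub_rpow {a b c p : ℝ} (hc : 0 < c) (hp : 0 ≤ p) (hpc : p ≤ c) :
    ∫ z in p..c, z ^ (a - 1) * (c - z) ^ (b - 1)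
      = c ^ (a + b - 1) * ∫ u in p / c..1, u ^ (a - 1) * (1 - u) ^ (b - 1) := by
  have hsub := intervalIntegral.integral_comp_mul_left
    (fun z ↦ z ^ (a - 1) * (c - z) ^ (b - 1)) hc.ne' (a := p / c) (b := 1)
  rw [mul_div_cancel₀ _ hc.ne', mul_one] at hsub
  have hscale : ∀ u ∈ uIcc (p / c) 1, (c * u) ^ (a - 1) * (c - c * u) ^ (b - 1)
      = c ^ (a + b - 1) * c⁻¹ * (u ^ (a - 1) * (1 - u) ^ (b - 1)) := by
    intro u hu
    rw [uIcc_of_le ((div_le_one hc).mpr hpc)] at hu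
    have hu₀ : 0 ≤ u := (div_nonneg hp hc.le).trans hu.1
    rw [show c - c * u = c * (1 - u) by ring, Real.mul_rpow hc.le hu₀,
      Real.mul_rpow hc.le (sub_nonneg.mpr hu.2), show a + b - 1 = (a - 1) + (b - 1) + 1 by ring,
      Real.rpow_add hc, Real.rpow_add hc, Real.rpow_one]
    field_simp
  rw [intervalIntegral.integral_congr hscale, intervalIntegral.integral_const_mul] at hsub
  rw [smul_eq_mul, eq_inv_mul_iff_mul_eq₀ hc.ne'] at hsub
  rw [← hsub]
  field_simp

lemma integral_rpow_mul_sub_rpow_eq_one_sub_betaCDF {a b c p : ℝ} (ha : 0 < a) (hb : 0 < b)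
    (hc : 0 < c) (hp : 0 ≤ p) (hpc : p ≤ c) :
    ∫ z in p..c, z ^ (a - 1) * (c - z) ^ (b - 1)
      = c ^ (a + b - 1) * (Real.Gamma a * Real.Gamma b / Real.Gamma (a + b)) *
          (1 - betaCDF a b (p / c)) := by
  have := Real.Gamma_pos_of_pos ha
  have := Real.Gamma_pos_of_pos hb
  have := Real.Gamma_pos_of_pos (add_pos ha hb)
  rw [integral_rpow_mul_sub_rpow hc hp hpc,
    one_sub_betaCDF ha hb (div_nonneg hp hc.le) ((div_le_one hc).mpr hpc)]
  field_simp

section GammaTail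

variable {a r : ℝ}

@[fun_prop]
lemma measurable_gammaPDF (a r : ℝ) : Measurable (gammaPDF a r) :=
  (measurable_gammaPDFReal a r).ennreal_ofReal

lemma exp_mul_gammaPDF (hr : 0 ≤ r) {r' : ℝ} (hr' : 0 < r') (x : ℝ) :
    ENNReal.ofReal (Real.exp ((r - r') * x)) * gammaPDF a r x
      = ENNReal.ofReal ((r / r') ^ a) * gammaPDF a r' x := by
  rcases lt_or_ge x 0 with hx | hx
  · simp [gammaPDF_of_neg hx]
  rw [gammaPDF_of_nonneg hx, gammaPDF_of_nonneg hx, ← ENNReal.ofReal_mul (by positivity),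
    ← ENNReal.ofReal_mul (by positivity), Real.div_rpow hr hr'.le]
  congr 1
  have hexp : Real.exp ((r - r') * x) * Real.exp (-(r * x)) = Real.exp (-(r' * x)) := by
    rw [← Real.exp_add]; ring_nf
  have : r' ^ a ≠ 0 := (Real.rpow_pos_of_pos hr' a).ne'
  field_simp
  linear_combination r ^ a * x ^ (a - 1) * (Real.Gamma a)⁻¹ * hexp

lemma gammaMeasure_Ici_le_of_le (ha : 0 < a) {r' : ℝ} (hr' : 0 < r') (hr'r : r' ≤ r) (s : ℝ) :
    gammaMeasure a r (Ici s) ≤ ENNReal.ofReal ((r / r') ^ a * Real.exp (-(r - r') * s)) := by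
  have hr : 0 ≤ r := hr'.le.trans hr'r
  have htilt : ∀ x ∈ Ici s, gammaPDF a r x ≤ ENNReal.ofReal (Real.exp (-(r - r') * s)) *
      (ENNReal.ofReal (Real.exp ((r - r') * x)) * gammaPDF a r x) := by
    intro x hx
    rw [← mul_assoc, ← ENNReal.ofReal_mul (Real.exp_nonneg _), ← Real.exp_add]
    refine le_mul_of_one_le_left (by positivity) (ENNReal.one_le_ofReal.mpr (Real.one_le_exp ?_))
    nlinarith [mem_Ici.mp hx]
  calc gammaMeasure a r (Ici s) = ∫⁻ x in Ici s, gammaPDF a r x :=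
        withDensity_apply _ measurableSet_Ici
    _ ≤ ∫⁻ x in Ici s, ENNReal.ofReal (Real.exp (-(r - r') * s)) *
          (ENNReal.ofReal (Real.exp ((r - r') * x)) * gammaPDF a r x) :=
        setLIntegral_mono (by fun_prop) htilt
    _ ≤ ∫⁻ x, ENNReal.ofReal (Real.exp (-(r - r') * s)) *
          (ENNReal.ofReal ((r / r') ^ a) * gammaPDF a r' x) := by
        simp_rw [exp_mul_gammaPDF hr hr']
        exact setLIntegral_le_lintegral _ _
    _ = ENNReal.ofReal ((r / r') ^ a * Real.exp (-(r - r') * s)) := by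
        rw [lintegral_const_mul _ (by fun_prop), lintegral_const_mul _ (by fun_prop),
          lintegral_gammaPDF_eq_one ha hr', mul_one, mul_comm,
          ENNReal.ofReal_mul (by positivity)]

-- Chernoff bound with the optimal tilt `r' = a / s`.
lemma gammaMeasure_Ici_le (ha : 0 < a) (hr : 0 < r) {s : ℝ} (hs : a ≤ r * s) :
    gammaMeasure a r (Ici s) ≤ ENNReal.ofReal ((r * s / a) ^ a * Real.exp (a - r * s)) := by
  have hs₀ : 0 < s := pos_of_mul_pos_right (ha.trans_le hs) hr.le
  have hbound := gammaMeasure_Ici_le_of_le ha (div_pos ha hs₀)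
    ((div_le_iff₀ hs₀).mpr hs) s
  rwa [div_div_eq_mul_div, show -(r - a / s) * s = a - r * s by field_simp; ring] at hbound

end GammaTail

instance (a r : ℝ) : NullSingletonClass (gammaMeasure a r) :=
  inferInstanceAs (NullSingletonClass (volume.withDensity _))

lemma measure_Ici_eq_ofReal_one_sub {P : Measure ℝ} [IsProbabilityMeasure P]
    [NullSingletonClass P] (t : ℝ) :
    P (Ici t) = ENNReal.ofReal (1 - (P (Iic t)).toReal) := by
  rw [measure_congr Ioi_ae_eq_Ici.symm, ← compl_Iic, prob_compl_eq_one_sub measurableSet_Iic,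
    ENNReal.ofReal_sub _ ENNReal.toReal_nonneg, ENNReal.ofReal_one,
    ENNReal.ofReal_toReal (measure_ne_top _ _)]

lemma measure_mem_and_le_eq_setLIntegral {Ω : Type*} [MeasurableSpace Ω] {μ : Measure Ω}
    [IsFiniteMeasure μ] {η ζ : Ω → ℝ} (hη : Measurable η) (hζ : Measurable ζ)
    (hind : IndepFun η ζ μ) {A : Set ℝ} (hA : MeasurableSet A) {f : ℝ → ℝ} (hf : Measurable f) :
    μ {ω | ζ ω ∈ A ∧ f (ζ ω) ≤ η ω} = ∫⁻ z in A, μ.map η (Ici (f z)) ∂μ.map ζ := by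
  set s : Set (ℝ × ℝ) := {p | p.2 ∈ A ∧ f p.2 ≤ p.1}
  have hs : MeasurableSet s :=
    (measurable_snd hA).inter (measurableSet_le (hf.comp measurable_snd) measurable_fst)
  have hslice : ∀ z, μ.map η ((fun x ↦ (x, z)) ⁻¹' s)
      = A.indicator (fun z ↦ μ.map η (Ici (f z))) z := by
    intro z
    by_cases hz : z ∈ A
    · simp [s, hz, Ici]
    · simp [s, hz]
  rw [← lintegral_indicator hA, ← funext hslice, ← Measure.prod_apply_symm hs,
    ← (indepFun_iff_map_prod_eq_prod_map_map hη.aemeasurable hζ.aemeasurable).mp hind,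
    Measure.map_apply (hη.prodMk hζ) hs]
  rfl

lemma gammaPDF_mul_chernoffBound {a k r θ z : ℝ} (ha : 0 < a) (hk : 0 < k) (hr : 0 < r)
    (hz : 0 < z) (hzθ : z ≤ θ) :
    gammaPDF a r z * ENNReal.ofReal ((r * (θ - z) / k) ^ k * Real.exp (k - r * (θ - z)))
      = ENNReal.ofReal (r ^ (a + k) * Real.exp k / (k ^ k * Real.Gamma a) * Real.exp (-(r * θ)) *
          (z ^ (a - 1) * (θ - z) ^ (k + 1 - 1))) := by
  have hθz : 0 ≤ θ - z := sub_nonneg.mpr hzθ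
  rw [gammaPDF_of_nonneg hz.le, ← ENNReal.ofReal_mul (by positivity)]
  congr 1
  have hexp : Real.exp (-(r * z)) * Real.exp (k - r * (θ - z))
      = Real.exp k * Real.exp (-(r * θ)) := by
    rw [← Real.exp_add, ← Real.exp_add]; ring_nf
  have := Real.Gamma_pos_of_pos ha
  have := Real.rpow_pos_of_pos hk k
  rw [add_sub_cancel_right, Real.div_rpow (by positivity) hk.le, Real.mul_rpow hr.le hθz,
    Real.rpow_add hr]
  field_simp
  linear_combination (θ - z) ^ k * hexp

lemma setLIntegral_gammaMeasure_Ici_sub_le {a k r θV θG : ℝ} (ha : 0 < a) (hk : 0 < k)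
    (hr : 0 < r) (hθV : 0 < θV) (hθ : θV ≤ θG) :
    ∫⁻ z in Icc θV (θG - k / r), gammaMeasure k r (Ici (θG - z)) ∂gammaMeasure a r
      ≤ ENNReal.ofReal (Real.exp k * Real.Gamma (k + 1) / (k ^ k * Real.Gamma (a + k + 1)) *
          (r * θG) ^ (a + k) * Real.exp (-(r * θG)) * (1 - betaCDF a (k + 1) (θV / θG))) := by
  have hθG : 0 < θG := hθV.trans_le hθ
  set D := r ^ (a + k) * Real.exp k / (k ^ k * Real.Gamma a) * Real.exp (-(r * θG))
  set F : ℝ → ℝ := fun z ↦ D * (z ^ (a - 1) * (θG - z) ^ (k + 1 - 1))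
  have hFint : IntegrableOn F (Icc θV θG) := by
    refine ContinuousOn.integrableOn_Icc (continuousOn_const.mul (ContinuousOn.mul ?_ ?_))
    · exact continuousOn_id.rpow_const fun z hz ↦ Or.inl (hθV.trans_le hz.1).ne'
    · exact (continuousOn_const.sub continuousOn_id).rpow_const fun _ _ ↦ Or.inr (by linarith)
  have hFnonneg : 0 ≤ᵐ[volume.restrict (Icc θV θG)] F := by
    filter_upwards [ae_restrict_mem measurableSet_Icc] with z hz
    have := hθV.trans_le hz.1
    have := sub_nonneg.mpr hz.2
    positivity
  calc ∫⁻ z in Icc θV (θG - k / r), gammaMeasure k r (Ici (θG - z)) ∂gammaMeasure a r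
      ≤ ∫⁻ z in Icc θV (θG - k / r),
          ENNReal.ofReal ((r * (θG - z) / k) ^ k * Real.exp (k - r * (θG - z)))
            ∂gammaMeasure a r := by
        refine setLIntegral_mono (by fun_prop) fun z hz ↦ ?_
        exact gammaMeasure_Ici_le hk hr ((div_le_iff₀' hr).mp (le_sub_comm.mp hz.2))
    _ = ∫⁻ z in Icc θV (θG - k / r), ENNReal.ofReal (F z) := by
        rw [gammaMeasure, setLIntegral_withDensity_eq_setLIntegral_mul _ (by fun_prop)
          (by fun_prop) measurableSet_Icc]
        refine setLIntegral_congr_fun measurableSet_Icc fun z hz ↦ ?_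
        exact gammaPDF_mul_chernoffBound ha hk hr (hθV.trans_le hz.1)
          (hz.2.trans (sub_le_self _ (div_pos hk hr).le))
    _ ≤ ∫⁻ z in Icc θV θG, ENNReal.ofReal (F z) :=
        lintegral_mono_set (Icc_subset_Icc_right (by have := div_pos hk hr; linarith))
    _ = ENNReal.ofReal (∫ z in θV..θG, F z) := by
        rw [intervalIntegral.integral_of_le hθ, ← integral_Icc_eq_integral_Ioc,
          ofReal_integral_eq_lintegral_ofReal hFint hFnonneg]
    _ = _ := by
        congr 1
        rw [intervalIntegral.integral_const_mul,
          integral_rpow_mul_sub_rpow_eq_one_sub_betaCDF ha (by linarith) hθG hθV.le hθ,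
          show a + (k + 1) - 1 = a + k by ring, show a + (k + 1) = a + k + 1 by ring,
          Real.mul_rpow hr.le hθG.le]
        have := Real.Gamma_pos_of_pos ha
        have := Real.Gamma_pos_of_pos (show 0 < a + k + 1 by linarith)
        have := Real.rpow_pos_of_pos hk k
        simp only [D]
        field_simp

lemma Cconst_nonneg {ν : ℕ} (hν : 1 ≤ ν) : 0 ≤ Cconst ν := by
  have hν' : (1 : ℝ) ≤ ν := by exact_mod_cast hν
  have := Real.Gamma_pos_of_pos (show (0 : ℝ) < ν / 2 + 1 / 2 by positivity)
  have := Real.Gamma_pos_of_pos (show (0 : ℝ) < ν / 2 + 1 by positivity)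
  have := Real.rpow_nonneg (sub_nonneg.mpr hν') (((ν : ℝ) - 1) / 2)
  unfold Cconst
  positivity

lemma Cconst_mul_rpow {ν : ℕ} (hν : 1 ≤ ν) {θ : ℝ} (hθ : 0 ≤ θ) :
    Cconst ν * θ ^ ((ν : ℝ) / 2)
      = Real.exp ((ν - 1) / 2) * Real.Gamma ((ν - 1) / 2 + 1) /
          (((ν - 1) / 2) ^ (((ν : ℝ) - 1) / 2) * Real.Gamma (1 / 2 + (ν - 1) / 2 + 1)) *
          (1 / 2 * θ) ^ (1 / 2 + ((ν : ℝ) - 1) / 2) := by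
  have hν' : (0 : ℝ) ≤ ν - 1 := by
    have : (1 : ℝ) ≤ ν := by exact_mod_cast hν
    linarith
  unfold Cconst
  set k : ℝ := ((ν : ℝ) - 1) / 2 with hk_def
  have hk : 0 ≤ k := by positivity
  rw [show (ν : ℝ) - 1 = 2 * k by rw [hk_def]; ring,
    show (ν : ℝ) / 2 = 1 / 2 + k by rw [hk_def]; ring, show (1 : ℝ) / 2 + k + 1 / 2 = k + 1 by ring,
    Real.mul_rpow zero_le_two hk, Real.mul_rpow (by norm_num) hθ,
    Real.div_rpow zero_le_one zero_le_two, Real.one_rpow, Real.rpow_add two_pos,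
    Real.sqrt_eq_rpow]
  ring

lemma measure_chiSq_bulk_le {Ω : Type*} [MeasurableSpace Ω] {μ : Measure Ω} [IsFiniteMeasure μ]
    {ν : ℕ} (hν : 2 ≤ ν) {η ζ : Ω → ℝ} (hη : Measurable η) (hζ : Measurable ζ)
    (hηdist : μ.map η = gammaMeasure (((ν : ℝ) - 1) / 2) (1 / 2))
    (hζdist : μ.map ζ = gammaMeasure ((1 : ℝ) / 2) (1 / 2)) (hindep : IndepFun η ζ μ)
    {θG θV : ℝ} (hθV : 0 < θV) (hθ : θV ≤ θG) :
    μ {ω | ζ ω ∈ Icc θV (θG - ν + 1) ∧ θG - ζ ω ≤ η ω}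
      ≤ ENNReal.ofReal (Cconst ν * Real.exp (-θG / 2) * θG ^ ((ν : ℝ) / 2) *
          (1 - betaCDF (1 / 2) (((ν : ℝ) + 1) / 2) (θV / θG))) := by
  have hk : (0 : ℝ) < ((ν : ℝ) - 1) / 2 := by
    have : (2 : ℝ) ≤ ν := by exact_mod_cast hν
    linarith
  rw [measure_mem_and_le_eq_setLIntegral hη hζ hindep measurableSet_Icc (by fun_prop),
    hηdist, hζdist, mul_right_comm (Cconst ν), Cconst_mul_rpow (by omega) (hθV.trans_le hθ).le,
    show θG - ν + 1 = θG - ((ν : ℝ) - 1) / 2 / (1 / 2) by ring,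
    show ((ν : ℝ) + 1) / 2 = ((ν : ℝ) - 1) / 2 + 1 by ring, show -θG / 2 = -(1 / 2 * θG) by ring]
  exact setLIntegral_gammaMeasure_Ici_sub_le one_half_pos hk one_half_pos hθV hθ

/-- Proposition 2: for independent `η ∼ χ²(ν−1)` and `ζ ∼ χ²(1)` and `θ_G ≥ θ_V > 0`,
`P(η + ζ ≥ θ_G, ζ ≥ θ_V) ≤ C(ν)·e^{−θ_G/2}·θ_G^{ν/2}·(1 − G_β(θ_V/θ_G; 1/2, (ν+1)/2))
 + (1 − F₁(θ_G − ν + 1))`. -/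
theorem stmt_6 {Ω : Type*} [MeasurableSpace Ω] (μ : Measure Ω) [IsProbabilityMeasure μ]
    (ν : ℕ) (hν : 2 ≤ ν) (η ζ : Ω → ℝ) (hη : Measurable η) (hζ : Measurable ζ)
    (hηdist : μ.map η = gammaMeasure (((ν : ℝ) - 1) / 2) (1 / 2))
    (hζdist : μ.map ζ = gammaMeasure ((1 : ℝ) / 2) (1 / 2))
    (hindep : IndepFun η ζ μ)
    (θG θV : ℝ) (hθV : 0 < θV) (hθ : θV ≤ θG) :
    μ {ω | θG ≤ η ω + ζ ω ∧ θV ≤ ζ ω}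
      ≤ ENNReal.ofReal
          (Cconst ν * Real.exp (-θG / 2) * θG ^ ((ν : ℝ) / 2) *
              (1 - betaCDF (1 / 2) (((ν : ℝ) + 1) / 2) (θV / θG))
            + (1 - chiSqOneCDF (θG - ν + 1))) := by
  have hθG : 0 < θG := hθV.trans_le hθ
  have := isProbabilityMeasure_gammaMeasure (a := 1 / 2) (r := 1 / 2) one_half_pos one_half_pos
  set T := θG - ν + 1
  have hsplit : {ω | θG ≤ η ω + ζ ω ∧ θV ≤ ζ ω}
      ⊆ {ω | T ≤ ζ ω} ∪ {ω | ζ ω ∈ Icc θV T ∧ θG - ζ ω ≤ η ω} := by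
    rintro ω ⟨hsum, hζω⟩
    by_cases hT : T ≤ ζ ω
    · exact Or.inl hT
    · exact Or.inr ⟨⟨hζω, (not_le.mp hT).le⟩, by linarith⟩
  have htail : μ {ω | T ≤ ζ ω} = ENNReal.ofReal (1 - chiSqOneCDF T) := by
    rw [show {ω | T ≤ ζ ω} = ζ ⁻¹' Ici T from rfl, ← Measure.map_apply hζ measurableSet_Ici,
      hζdist]
    exact measure_Ici_eq_ofReal_one_sub T
  have hbulk_nonneg : 0 ≤ Cconst ν * Real.exp (-θG / 2) * θG ^ ((ν : ℝ) / 2) *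
      (1 - betaCDF (1 / 2) (((ν : ℝ) + 1) / 2) (θV / θG)) := by
    have := Cconst_nonneg (show 1 ≤ ν by omega)
    exact mul_nonneg (by positivity) (sub_nonneg.mpr (betaCDF_le_one one_half_pos (by positivity)
      (div_nonneg hθV.le hθG.le) ((div_le_one hθG).mpr hθ)))
  have hcdf : chiSqOneCDF T ≤ 1 := measureReal_le_one
  calc μ {ω | θG ≤ η ω + ζ ω ∧ θV ≤ ζ ω}
      ≤ μ {ω | T ≤ ζ ω} + μ {ω | ζ ω ∈ Icc θV T ∧ θG - ζ ω ≤ η ω} :=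
        (measure_mono hsplit).trans (measure_union_le _ _)
    _ ≤ _ := by
      rw [add_comm, ENNReal.ofReal_add hbulk_nonneg (sub_nonneg.mpr hcdf), htail]
      exact add_le_add (measure_chiSq_bulk_le hν hη hζ hηdist hζdist hindep hθV hθ) le_rfl
end

section
/- Let S be a finite group acting on a set U, μ the uniform probability measure on S, U a random variable in U, and ρ_v : U → ℝ a score such that the family (ρ_v(ξ'ξ•U))_{ξ'∈S} has a distribution independent of ξ ∈ S. Define T_v(u) = μ({ξ : ρ_v(u) ≤ ρ_v(ξ•u)}). Then for every θ ∈ [0,1], P(T_v(U) ≤ θ) ≤ θ. -/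
open MeasureTheory Finset
open scoped ENNReal

/-!
By invariance, the |S| translated events `{T(ξ • U) ≤ θ}` all have the probability of
`{T(U) ≤ θ}`. For a fixed outcome at most `θ |S|` of them occur: the indices whose score is
exceeded by at most `k` scores number at most `k`. Taking expectations of this count gives
`|S| P(T(U) ≤ θ) ≤ θ |S|`.
-/

section UpperCount

variable {ι α : Type*} [Fintype ι] [LinearOrder α]

def upperCount (f : ι → α) (i : ι) : ℕ := #{j | f i ≤ f j}

lemma upperCount_comp_equiv (f : ι → α) (e : ι ≃ ι) (i : ι) :
    upperCount (f ∘ e) i = upperCount f (e i) :=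
  card_equiv e fun j => by simp

lemma card_filter_upperCount_le (f : ι → α) (k : ℕ) : #{i | upperCount f i ≤ k} ≤ k := by
  obtain hempty | hne := (univ.filter fun i => upperCount f i ≤ k).eq_empty_or_nonempty
  · simp [hempty]
  obtain ⟨i₀, hi₀, hmin⟩ := exists_min_image _ f hne
  calc #{i | upperCount f i ≤ k} ≤ upperCount f i₀ :=
        card_le_card fun i hi => mem_filter.2 ⟨mem_univ i, hmin i hi⟩
    _ ≤ k := (mem_filter.1 hi₀).2

lemma measurable_upperCount [TopologicalSpace α] [MeasurableSpace α] [OpensMeasurableSpace α]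
    [OrderClosedTopology α] [SecondCountableTopology α] (i : ι) :
    Measurable fun f : ι → α => upperCount f i := by
  classical
  simp_rw [upperCount, card_filter]
  exact Finset.measurable_sum _ fun j _ =>
    Measurable.ite (measurableSet_le (measurable_pi_apply i) (measurable_pi_apply j))
      measurable_const measurable_const

end UpperCount

lemma sum_measure_le_of_forall_card_le {Ω ι : Type*} [MeasurableSpace Ω] [Fintype ι]
    (μ : Measure Ω) {A : ι → Set Ω} [∀ ω, DecidablePred (ω ∈ A ·)]
    (hA : ∀ i, MeasurableSet (A i)) {k : ℕ} (hk : ∀ ω, #{i | ω ∈ A i} ≤ k) :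
    ∑ i, μ (A i) ≤ k * μ Set.univ := by
  calc ∑ i, μ (A i) = ∫⁻ ω, ∑ i, (A i).indicator 1 ω ∂μ := by
        rw [lintegral_finsetSum _ fun i _ => measurable_one.indicator (hA i)]
        simp [lintegral_indicator (hA _)]
    _ ≤ ∫⁻ _, (k : ℝ≥0∞) ∂μ := lintegral_mono fun ω => by
        simp only [Set.indicator_apply, Pi.one_apply, sum_boole]
        exact_mod_cast hk ω
    _ = k * μ Set.univ := lintegral_const _

theorem card_mul_measure_upperCount_le {Ω S α : Type*} [MeasurableSpace Ω] [Group S] [Fintype S]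
    [LinearOrder α] [TopologicalSpace α] [MeasurableSpace α] [OpensMeasurableSpace α]
    [OrderClosedTopology α] [SecondCountableTopology α]
    (μ : Measure Ω) {X : Ω → S → α} (hX : Measurable X)
    (hinv : ∀ ξ : S, μ.map (fun ω ξ' => X ω (ξ' * ξ)) = μ.map X) (k : ℕ) :
    Fintype.card S * μ {ω | upperCount (X ω) 1 ≤ k} ≤ k * μ Set.univ := by
  set B : Set (S → α) := {f | upperCount f 1 ≤ k}
  have hB : MeasurableSet B := measurable_upperCount 1 measurableSet_Iic
  have hXξ (ξ : S) : Measurable fun ω ξ' => X ω (ξ' * ξ) := by fun_prop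
  have hpre (ξ : S) : {ω | upperCount (X ω) ξ ≤ k} = (fun ω ξ' => X ω (ξ' * ξ)) ⁻¹' B := by
    ext ω
    have := upperCount_comp_equiv (X ω) (Equiv.mulRight ξ) 1
    simp_all [B, Function.comp_def]
  have hmeasure (ξ : S) : μ {ω | upperCount (X ω) ξ ≤ k} = μ {ω | upperCount (X ω) 1 ≤ k} := by
    rw [hpre, hpre, ← Measure.map_apply (hXξ ξ) hB, ← Measure.map_apply (hXξ 1) hB, hinv, hinv]
  calc Fintype.card S * μ {ω | upperCount (X ω) 1 ≤ k}
      = ∑ ξ, μ {ω | upperCount (X ω) ξ ≤ k} := by simp [hmeasure]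
    _ ≤ k * μ Set.univ :=
        sum_measure_le_of_forall_card_le μ (fun ξ => hpre ξ ▸ hXξ ξ hB)
          fun ω => card_filter_upperCount_le (X ω) k

/-- Validity of randomization tests: `S` is a finite group acting on the data space,
`μS`-averages are uniform over `S`, and the family `(ρ_v((ξ'ξ)•U))_{ξ'∈S}` has a
distribution independent of `ξ`. With
`T_v(u) = μS({ξ : ρ_v(u) ≤ ρ_v(ξ•u)})` (the proportion of group elements giving a score
at least the observed one), for every `θ ∈ [0,1]`, `P(T_v(U) ≤ θ) ≤ θ`. -/
theorem stmt_8 {Ω S 𝒰 : Type*} [MeasurableSpace Ω] (μ : Measure Ω) [IsProbabilityMeasure μ]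
    [Group S] [Fintype S] [MulAction S 𝒰]
    (U : Ω → 𝒰) (ρv : 𝒰 → ℝ)
    (hmeas : ∀ ξ : S, Measurable (fun ω => ρv (ξ • U ω)))
    (hinv : ∀ ξ : S,
      μ.map (fun ω => fun ξ' : S => ρv ((ξ' * ξ) • U ω))
        = μ.map (fun ω => fun ξ' : S => ρv (ξ' • U ω)))
    (Tv : 𝒰 → ℝ)
    (hTv : ∀ u, Tv u = (Nat.card {ξ : S // ρv u ≤ ρv (ξ • u)} : ℝ) / Fintype.card S)
    (θ : ℝ) (hθ : θ ∈ Set.Icc (0 : ℝ) 1) :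
    (μ {ω | Tv (U ω) ≤ θ}).toReal ≤ θ := by
  set X : Ω → S → ℝ := fun ω ξ' => ρv (ξ' • U ω)
  set n : ℝ := (Fintype.card S : ℝ)
  have hn : 0 < n := Nat.cast_pos.2 Fintype.card_pos
  have hθn : 0 ≤ θ * n := mul_nonneg hθ.1 hn.le
  -- the p-value is a multiple of `1 / n`, so the threshold `θ` may be rounded down to `⌊θ n⌋₊ / n`
  have hset : {ω | Tv (U ω) ≤ θ} = {ω | upperCount (X ω) 1 ≤ ⌊θ * n⌋₊} := by
    ext ω
    rw [Set.mem_ofPred_eq, hTv, Nat.card_eq_fintype_card, Fintype.card_subtype, div_le_iff₀ hn,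
      Set.mem_ofPred_eq, Nat.le_floor_iff hθn]
    simp [upperCount, X]
  have hbound := card_mul_measure_upperCount_le μ (measurable_pi_lambda X hmeas) hinv ⌊θ * n⌋₊
  rw [measure_univ, mul_one, ← hset] at hbound
  have hreal : n * (μ {ω | Tv (U ω) ≤ θ}).toReal ≤ ⌊θ * n⌋₊ := by
    simpa using ENNReal.toReal_mono (ENNReal.natCast_ne_top _) hbound
  nlinarith [Nat.floor_le hθn]
end

section
/- Let S be a finite group acting on U, μ uniform on S, and ρ_g, ρ_v scores such that the joint distribution of (ρ_g((ξ'ξ)•U), ρ_v((ξ'ξ)•U))_{ξ'∈S} is independent of ξ ∈ S. Define T_g(u) = μ(ξ : ρ_g(u) ≤ ρ_g(ξ•u)), N_g^{θ_G}(u) = μ(ξ : T_g(ξ•u) ≤ θ_G), and T_v^{θ_G}(u) = μ(ξ : ρ_v(u) ≤ ρ_v(ξ•u) and T_g(ξ•u) ≤ θ_G) / N_g^{θ_G}(u). Then P(T_g(U) ≤ θ_G and T_v^{θ_G}(U) ≤ θ_V) ≤ θ_G · θ_V. -/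
/-!
Fix a point `x`. The cell-level p-values `T_g(ξ • x)` along the orbit are upper-tail ranks of
the scores `ρ_g(ξ • x)`, so at most `θ_G |S|` of them are `≤ θ_G`; call this set `K`. Among `K`
the index-level p-values are again upper-tail ranks, now of `ρ_v`, so at most `θ_V |K|` of
them are `≤ θ_V`. Hence the two-level rejection event holds at `ξ • x` for at most
`θ_G θ_V |S|` elements `ξ`. The invariance hypothesis makes `P(ξ • U ∈ E)` independent of
`ξ`, and averaging over `ξ` bounds it by `θ_G θ_V`.
-/

open MeasureTheory Finset

theorem card_filter_upperTail_le {α β : Type*} [LinearOrder β] (K : Finset α) (y : α → β)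
    {t : ℝ} (ht : 0 ≤ t) :
    (#{ξ ∈ K | (#{η ∈ K | y ξ ≤ y η} : ℝ) ≤ t * #K} : ℝ) ≤ t * #K := by
  set B := {ξ ∈ K | (#{η ∈ K | y ξ ≤ y η} : ℝ) ≤ t * #K}
  rcases B.eq_empty_or_nonempty with hB | hB
  · rw [hB, card_empty, Nat.cast_zero]
    positivity
  -- every element of `B` lies above the minimiser of `y` on `B`
  obtain ⟨ξ₀, hξ₀, hmin⟩ := B.exists_min_image y hB
  calc (#B : ℝ) ≤ #{η ∈ K | y ξ₀ ≤ y η} := by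
        exact_mod_cast card_le_card fun η hη => mem_filter.2 ⟨(mem_filter.1 hη).1, hmin η hη⟩
    _ ≤ t * #K := (mem_filter.1 hξ₀).2

theorem measurable_natCard_subtype {X ι : Type*} [MeasurableSpace X] [Finite ι]
    {P : X → ι → Prop} (hP : ∀ i, MeasurableSet {x | P x i}) :
    Measurable fun x => (Nat.card {i // P x i} : ℝ) :=
  (measurable_of_finite fun p : ι → Prop => (Nat.card {i // p i} : ℝ)).comp
    (measurable_pi_lambda _ fun i => measurableSet_setOfPred.1 (hP i))

theorem measureReal_preimage_le_of_card_smul_mem_le {S Ω X : Type*} [Fintype S] [Nonempty S]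
    [SMul S X] [MeasurableSpace Ω] [MeasurableSpace X] [MeasurableConstSMul S X]
    {μ : Measure Ω} [IsProbabilityMeasure μ] {Z : Ω → X} (hZ : Measurable Z)
    (hinv : ∀ ξ : S, μ.map (fun ω => ξ • Z ω) = μ.map Z) {A : Set X} (hA : MeasurableSet A)
    {c : ℝ} (hc : ∀ x, (Nat.card {ξ : S // ξ • x ∈ A} : ℝ) ≤ c * Fintype.card S) :
    μ.real (Z ⁻¹' A) ≤ c := by
  have hsmulZ (ξ : S) : Measurable fun ω => ξ • Z ω := (measurable_const_smul ξ).comp hZ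
  have hmeas (ξ : S) : MeasurableSet ((fun ω => ξ • Z ω) ⁻¹' A) := hsmulZ ξ hA
  have hpre (ξ : S) : μ.real ((fun ω => ξ • Z ω) ⁻¹' A) = μ.real (Z ⁻¹' A) := by
    rw [measureReal_def, measureReal_def, ← Measure.map_apply (hsmulZ ξ) hA, hinv,
      Measure.map_apply hZ hA]
  have hint (ξ : S) : Integrable (((fun ω => ξ • Z ω) ⁻¹' A).indicator (1 : Ω → ℝ)) μ :=
    (integrable_const (1 : ℝ)).indicator (hmeas ξ)
  have hcount (ω : Ω) : ∑ ξ : S, ((fun ω => ξ • Z ω) ⁻¹' A).indicator (1 : Ω → ℝ) ω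
      = Nat.card {ξ : S // ξ • Z ω ∈ A} := by
    classical
    simp [Set.indicator_apply, Nat.card_eq_fintype_card, Fintype.card_subtype]
  have hn : (0 : ℝ) < Fintype.card S := by positivity
  refine le_of_mul_le_mul_left ?_ hn
  calc (Fintype.card S : ℝ) * μ.real (Z ⁻¹' A)
      = ∑ ξ : S, μ.real ((fun ω => ξ • Z ω) ⁻¹' A) := by simp [hpre]
    _ = ∫ ω, ∑ ξ : S, ((fun ω => ξ • Z ω) ⁻¹' A).indicator 1 ω ∂μ := by
        rw [integral_finsetSum _ fun ξ _ => hint ξ]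
        simp only [integral_indicator_one (hmeas _)]
    _ ≤ ∫ _ω, c * Fintype.card S ∂μ :=
        integral_mono (integrable_finsetSum _ fun ξ _ => hint ξ) (integrable_const _)
          fun ω => (hcount ω).trans_le (hc _)
    _ = Fintype.card S * c := by simp [mul_comm]

section PValues

variable {S X : Type*} [Fintype S]

variable (S) in
noncomputable def cellPValue [SMul S X] (ρ : X → ℝ) (x : X) : ℝ :=
  (Nat.card {ξ : S // ρ x ≤ ρ (ξ • x)} : ℝ) / Fintype.card S

variable (S) in
noncomputable def selectedFraction [SMul S X] (θ : ℝ) (ρg : X → ℝ) (x : X) : ℝ :=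
  (Nat.card {ξ : S // cellPValue S ρg (ξ • x) ≤ θ} : ℝ) / Fintype.card S

variable (S) in
noncomputable def indexPValue [SMul S X] (θ : ℝ) (ρg ρv : X → ℝ) (x : X) : ℝ :=
  ((Nat.card {ξ : S // ρv x ≤ ρv (ξ • x) ∧ cellPValue S ρg (ξ • x) ≤ θ} : ℝ) / Fintype.card S)
    / selectedFraction S θ ρg x

variable (S) in
def rejectionSet [SMul S X] (θG θV : ℝ) (ρg ρv : X → ℝ) : Set X :=
  {x | cellPValue S ρg x ≤ θG ∧ indexPValue S θG ρg ρv x ≤ θV}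

variable [Group S] [MulAction S X]

theorem natCard_smul_smul_eq_card_filter (P : X → Prop) (ξ : S) (x : X) [DecidablePred P] :
    Nat.card {ξ' : S // P (ξ' • ξ • x)} = #{η : S | P (η • x)} := by
  rw [← Fintype.card_subtype, ← Nat.card_eq_fintype_card]
  exact Nat.card_congr (Equiv.subtypeEquiv (Equiv.mulRight ξ) fun ξ' => by simp [mul_smul])

theorem cellPValue_smul (ρ : X → ℝ) (ξ : S) (x : X) :
    cellPValue S ρ (ξ • x) = (#{η : S | ρ (ξ • x) ≤ ρ (η • x)} : ℝ) / Fintype.card S := by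
  rw [cellPValue, natCard_smul_smul_eq_card_filter (fun y => ρ (ξ • x) ≤ ρ y)]

theorem selectedFraction_smul (θ : ℝ) (ρg : X → ℝ) (ξ : S) (x : X) :
    selectedFraction S θ ρg (ξ • x)
      = (#{η : S | cellPValue S ρg (η • x) ≤ θ} : ℝ) / Fintype.card S := by
  rw [selectedFraction, natCard_smul_smul_eq_card_filter (fun y => cellPValue S ρg y ≤ θ)]

theorem indexPValue_smul (θ : ℝ) (ρg ρv : X → ℝ) (ξ : S) (x : X) :
    indexPValue S θ ρg ρv (ξ • x)
      = (#{η ∈ {η : S | cellPValue S ρg (η • x) ≤ θ} | ρv (ξ • x) ≤ ρv (η • x)} : ℝ)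
        / #{η : S | cellPValue S ρg (η • x) ≤ θ} := by
  have hn : (Fintype.card S : ℝ) ≠ 0 := by positivity
  rw [indexPValue, selectedFraction_smul, div_div_div_cancel_right₀ hn, filter_filter,
    natCard_smul_smul_eq_card_filter (fun y => ρv (ξ • x) ≤ ρv y ∧ cellPValue S ρg y ≤ θ)]
  simp only [and_comm]

theorem card_smul_mem_rejectionSet_le {θG θV : ℝ} (hθG : 0 ≤ θG) (hθV : 0 ≤ θV)
    (ρg ρv : X → ℝ) (x : X) :
    (Nat.card {ξ : S // ξ • x ∈ rejectionSet S θG θV ρg ρv} : ℝ)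
      ≤ θG * θV * Fintype.card S := by
  set K : Finset S := {η | cellPValue S ρg (η • x) ≤ θG}
  have hK : (#K : ℝ) ≤ θG * Fintype.card S := by
    have hn : (0 : ℝ) < Fintype.card S := by positivity
    convert card_filter_upperTail_le univ (fun η : S => ρg (η • x)) hθG using 4
    · rw [cellPValue_smul, div_le_iff₀ hn, card_univ]
    · exact card_univ.symm
  have hsub : {ξ : S | ξ • x ∈ rejectionSet S θG θV ρg ρv}
      ⊆ ({ξ ∈ K | (#{η ∈ K | ρv (ξ • x) ≤ ρv (η • x)} : ℝ) ≤ θV * #K} : Finset S) := by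
    rintro ξ ⟨hcell, hindex⟩
    have hξK : ξ ∈ K := mem_filter.2 ⟨mem_univ ξ, hcell⟩
    have hKpos : (0 : ℝ) < #K := by exact_mod_cast card_pos.2 ⟨ξ, hξK⟩
    rw [indexPValue_smul, div_le_iff₀ hKpos] at hindex
    exact mem_filter.2 ⟨hξK, hindex⟩
  calc (Nat.card {ξ : S // ξ • x ∈ rejectionSet S θG θV ρg ρv} : ℝ)
      ≤ #{ξ ∈ K | (#{η ∈ K | ρv (ξ • x) ≤ ρv (η • x)} : ℝ) ≤ θV * #K} := by
        exact_mod_cast (Nat.card_mono (Set.toFinite _) hsub).trans_eq (Nat.card_eq_finsetCard _)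
    _ ≤ θV * #K := card_filter_upperTail_le K (fun η => ρv (η • x)) hθV
    _ ≤ θG * θV * Fintype.card S := by nlinarith

theorem preimage_rejectionSet {Y : Type*} [SMul S Y] (φ : X →[S] Y) (θG θV : ℝ) (ρg ρv : Y → ℝ) :
    φ ⁻¹' rejectionSet S θG θV ρg ρv = rejectionSet S θG θV (ρg ∘ φ) (ρv ∘ φ) := by
  ext x
  simp only [rejectionSet, indexPValue, selectedFraction, cellPValue, Set.mem_preimage,
    Set.mem_ofPred_eq, Function.comp_apply, map_smul]

section Measurability

variable [MeasurableSpace X] [MeasurableConstSMul S X] {ρg ρv : X → ℝ}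

theorem measurable_cellPValue (hg : Measurable ρg) : Measurable (cellPValue S ρg) :=
  (measurable_natCard_subtype fun ξ =>
    measurableSet_le hg (hg.comp (measurable_const_smul ξ))).div_const _

theorem measurable_selectedFraction (θ : ℝ) (hg : Measurable ρg) :
    Measurable (selectedFraction S θ ρg) :=
  (measurable_natCard_subtype fun ξ => measurableSet_le
    ((measurable_cellPValue hg).comp (measurable_const_smul ξ)) measurable_const).div_const _

theorem measurable_indexPValue (θ : ℝ) (hg : Measurable ρg) (hv : Measurable ρv) :
    Measurable (indexPValue S θ ρg ρv) :=
  ((measurable_natCard_subtype fun ξ =>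
    (measurableSet_le hv (hv.comp (measurable_const_smul ξ))).inter (measurableSet_le
      ((measurable_cellPValue hg).comp (measurable_const_smul ξ)) measurable_const)).div_const
    _).div (measurable_selectedFraction θ hg)

theorem measurableSet_rejectionSet (θG θV : ℝ) (hg : Measurable ρg) (hv : Measurable ρv) :
    MeasurableSet (rejectionSet S θG θV ρg ρv) :=
  (measurableSet_le (measurable_cellPValue hg) measurable_const).inter
    (measurableSet_le (measurable_indexPValue θG hg hv) measurable_const)

end Measurability

end PValues

/-- `S` acts on profiles by right translation of the argument, which makes `orbit f` equivariant
and turns the joint-invariance hypothesis into invariance of the law of `orbit (ρg, ρv) ∘ U`. -/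
def Profile (S Y : Type*) : Type _ := S → Y

namespace Profile

variable {S X Y : Type*}

instance [MeasurableSpace Y] : MeasurableSpace (Profile S Y) := MeasurableSpace.pi

instance [Monoid S] : MulAction S (Profile S Y) where
  smul ξ w ξ' := w (ξ' * ξ)
  one_smul w := funext fun ξ' => congrArg w (mul_one ξ')
  mul_smul ξ₁ ξ₂ w := funext fun ξ' => congrArg w (mul_assoc ξ' ξ₁ ξ₂).symm

instance [Monoid S] [MeasurableSpace Y] : MeasurableConstSMul S (Profile S Y) :=
  ⟨fun ξ => measurable_pi_lambda _ fun ξ' => measurable_pi_apply (ξ' * ξ)⟩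

def orbit [Monoid S] [MulAction S X] (f : X → Y) : X →[S] Profile S Y where
  toFun x ξ' := f (ξ' • x)
  map_smul' ξ x := funext fun ξ' => congrArg f (mul_smul ξ' ξ x).symm

@[simp]
theorem orbit_apply [Monoid S] [MulAction S X] (f : X → Y) (x : X) (ξ' : S) :
    orbit f x ξ' = f (ξ' • x) :=
  rfl

end Profile

/-- Theorem 1 (doubly-null case) for the asymptotic two-level permutation test: under
the joint invariance assumption for the scores `(ρ_g, ρ_v)`, with
`T_g(u) = μS(ξ : ρ_g(u) ≤ ρ_g(ξ•u))`, `N_g^{θ_G}(u) = μS(ξ : T_g(ξ•u) ≤ θ_G)` and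
`T_v^{θ_G}(u) = μS(ξ : ρ_v(u) ≤ ρ_v(ξ•u), T_g(ξ•u) ≤ θ_G)/N_g^{θ_G}(u)`, one has
`P(T_g(U) ≤ θ_G, T_v^{θ_G}(U) ≤ θ_V) ≤ θ_G·θ_V`. -/
theorem stmt_9 {Ω S 𝒰 : Type*} [MeasurableSpace Ω] (μ : Measure Ω) [IsProbabilityMeasure μ]
    [Group S] [Fintype S] [MulAction S 𝒰]
    (U : Ω → 𝒰) (ρg ρv : 𝒰 → ℝ)
    (hmeasg : ∀ ξ : S, Measurable (fun ω => ρg (ξ • U ω)))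
    (hmeasv : ∀ ξ : S, Measurable (fun ω => ρv (ξ • U ω)))
    (hinv : ∀ ξ : S,
      μ.map (fun ω => fun ξ' : S => (ρg ((ξ' * ξ) • U ω), ρv ((ξ' * ξ) • U ω)))
        = μ.map (fun ω => fun ξ' : S => (ρg (ξ' • U ω), ρv (ξ' • U ω))))
    (θG θV : ℝ) (hθG : θG ∈ Set.Icc (0 : ℝ) 1) (hθV : θV ∈ Set.Icc (0 : ℝ) 1)
    (Tg Ng Tvc : 𝒰 → ℝ)
    (hTg : ∀ u, Tg u = (Nat.card {ξ : S // ρg u ≤ ρg (ξ • u)} : ℝ) / Fintype.card S)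
    (hNg : ∀ u, Ng u = (Nat.card {ξ : S // Tg (ξ • u) ≤ θG} : ℝ) / Fintype.card S)
    (hTvc : ∀ u, Tvc u
      = ((Nat.card {ξ : S // ρv u ≤ ρv (ξ • u) ∧ Tg (ξ • u) ≤ θG} : ℝ) / Fintype.card S)
          / Ng u) :
    (μ {ω | Tg (U ω) ≤ θG ∧ Tvc (U ω) ≤ θV}).toReal ≤ θG * θV := by
  obtain rfl : Tg = cellPValue S ρg := funext hTg
  obtain rfl : Ng = selectedFraction S θG ρg := funext hNg
  obtain rfl : Tvc = indexPValue S θG ρg ρv := funext hTvc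
  let W : 𝒰 →[S] Profile S (ℝ × ℝ) := Profile.orbit fun u => (ρg u, ρv u)
  have hWg : (fun w : Profile S (ℝ × ℝ) => (w 1).1) ∘ W = ρg := funext fun u => by
    simp [W]
  have hWv : (fun w : Profile S (ℝ × ℝ) => (w 1).2) ∘ W = ρv := funext fun u => by
    simp [W]
  have hevent : {ω | cellPValue S ρg (U ω) ≤ θG ∧ indexPValue S θG ρg ρv (U ω) ≤ θV}
      = (W ∘ U) ⁻¹' rejectionSet S θG θV (fun w : Profile S (ℝ × ℝ) => (w 1).1)
          (fun w => (w 1).2) := by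
    rw [Set.preimage_comp, preimage_rejectionSet, hWg, hWv]
    rfl
  have hWU : Measurable (W ∘ U) := measurable_pi_lambda _ fun ξ => (hmeasg ξ).prodMk (hmeasv ξ)
  rw [hevent, ← measureReal_def]
  exact measureReal_preimage_le_of_card_smul_mem_le hWU hinv
    (measurableSet_rejectionSet θG θV (by fun_prop) (by fun_prop))
    (card_smul_mem_rejectionSet_le hθG.1 hθV.1 _ _)
end

section
/- Let p be uniformly distributed on [0, a] for some a ∈ (0,1], and conditionally on p let N ∼ Binomial(K, p). Then for θ ∈ [0,1], P(N ≤ K·a·θ) ≤ (⌊K·a·θ⌋ + 1)/((K+1)·a) ≤ (K·a·θ + 1)/((K+1)·a). -/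
/-!
Each atom `{N = j}` has mass `(1/a) ∫₀ᵃ C(K,j) tʲ (1-t)^(K-j) dt`, which is at most
`(1/a) ∫₀¹ C(K,j) tʲ (1-t)^(K-j) dt = 1/((K+1)a)` by the Beta integral
`∫₀¹ tʲ (1-t)ⁿ dt = j! n! / (j+n+1)!`. The event `N ≤ Kaθ` is the union of the
`⌊Kaθ⌋ + 1` atoms `j ≤ ⌊Kaθ⌋`.
-/

open MeasureTheory Set

open scoped Nat ENNReal

theorem integral_pow_mul_one_sub_pow (j n : ℕ) :
    ∫ x in (0 : ℝ)..1, x ^ j * (1 - x) ^ n = (j ! * n ! / (j + n + 1)! : ℝ) := by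
  have hbeta := Complex.betaIntegral_eq_Gamma_mul_div (j + 1) (n + 1)
    (by simp only [Complex.add_re, Complex.natCast_re, Complex.one_re]; positivity)
    (by simp only [Complex.add_re, Complex.natCast_re, Complex.one_re]; positivity)
  rw [show (j : ℂ) + 1 + (n + 1) = ((j + n + 1 : ℕ) : ℂ) + 1 by push_cast; ring,
    Complex.Gamma_nat_eq_factorial, Complex.Gamma_nat_eq_factorial,
    Complex.Gamma_nat_eq_factorial, Complex.betaIntegral] at hbeta
  simp only [add_sub_cancel_right, Complex.cpow_natCast] at hbeta
  apply Complex.ofReal_injective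
  rw [← intervalIntegral.integral_ofReal]
  push_cast
  exact hbeta

theorem integral_choose_mul_pow_mul_one_sub_pow {K j : ℕ} (hj : j ≤ K) :
    ∫ x in (0 : ℝ)..1, (K.choose j : ℝ) * x ^ j * (1 - x) ^ (K - j) = 1 / (K + 1) := by
  simp_rw [mul_assoc]
  rw [intervalIntegral.integral_const_mul, integral_pow_mul_one_sub_pow,
    show j + (K - j) + 1 = K + 1 by omega, Nat.cast_choose ℝ hj, Nat.factorial_succ]
  have := K.factorial_pos
  field_simp
  push_cast
  ring

theorem setIntegral_Icc_choose_mul_pow_mul_one_sub_pow_le (K j : ℕ) {a : ℝ} (ha : a ≤ 1) :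
    ∫ x in Icc 0 a, (K.choose j : ℝ) * x ^ j * (1 - x) ^ (K - j) ≤ 1 / (K + 1) := by
  rcases le_or_gt j K with hj | hj
  · calc ∫ x in Icc 0 a, (K.choose j : ℝ) * x ^ j * (1 - x) ^ (K - j)
        ≤ ∫ x in Icc 0 1, (K.choose j : ℝ) * x ^ j * (1 - x) ^ (K - j) := by
          refine setIntegral_mono_set (Continuous.integrableOn_Icc (by fun_prop)) ?_
            (Icc_subset_Icc_right ha).eventuallyLE
          filter_upwards [ae_restrict_mem measurableSet_Icc] with x hx
          have : 0 ≤ 1 - x := sub_nonneg.mpr hx.2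
          have := hx.1
          positivity
      _ = 1 / (K + 1) := by
          rw [integral_Icc_eq_integral_Ioc, ← intervalIntegral.integral_of_le zero_le_one,
            integral_choose_mul_pow_mul_one_sub_pow hj]
  · simp only [Nat.choose_eq_zero_of_lt hj, Nat.cast_zero, zero_mul, integral_zero]
    positivity

theorem measure_le_natCast_add_one_mul {Ω : Type*} [MeasurableSpace Ω] (μ : Measure Ω)
    {N : Ω → ℕ} {c : ℝ≥0∞} (h : ∀ j, μ {ω | N ω = j} ≤ c) (m : ℕ) :
    μ {ω | N ω ≤ m} ≤ (m + 1) * c :=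
  calc μ {ω | N ω ≤ m} = μ (⋃ j ∈ Finset.range (m + 1), {ω | N ω = j}) := by
        congr 1; ext ω; simp
    _ ≤ ∑ j ∈ Finset.range (m + 1), μ {ω | N ω = j} := measure_biUnion_finset_le _ _
    _ ≤ ∑ _j ∈ Finset.range (m + 1), c := Finset.sum_le_sum fun j _ => h j
    _ = (m + 1) * c := by simp

theorem stmt_13_general {Ω : Type*} [MeasurableSpace Ω] (μ : Measure Ω)
    (K : ℕ) (a : ℝ) (ha : 0 < a) (ha1 : a ≤ 1)
    (p : Ω → ℝ) (N : Ω → ℕ)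
    (hjoint : ∀ (j : ℕ) (s : Set ℝ), MeasurableSet s →
      μ {ω | N ω = j ∧ p ω ∈ s}
        = ENNReal.ofReal
            (∫ t in s ∩ Set.Icc (0 : ℝ) a,
              (1 / a) * (Nat.choose K j : ℝ) * t ^ j * (1 - t) ^ (K - j)))
    (θ : ℝ) (hθ : θ ∈ Set.Icc (0 : ℝ) 1) :
    (μ {ω | (N ω : ℝ) ≤ (K : ℝ) * a * θ}).toReal
        ≤ ((Nat.floor ((K : ℝ) * a * θ) : ℝ) + 1) / (((K : ℝ) + 1) * a) ∧
      ((Nat.floor ((K : ℝ) * a * θ) : ℝ) + 1) / (((K : ℝ) + 1) * a)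
        ≤ ((K : ℝ) * a * θ + 1) / (((K : ℝ) + 1) * a) := by
  have hKaθ : 0 ≤ (K : ℝ) * a * θ := by have := hθ.1; positivity
  have hatom (j : ℕ) : μ {ω | N ω = j} ≤ ENNReal.ofReal (1 / ((K + 1) * a)) := by
    have h := hjoint j univ MeasurableSet.univ
    simp only [mem_univ, and_true, univ_inter] at h
    rw [h]
    refine ENNReal.ofReal_le_ofReal ?_
    simp_rw [mul_assoc (1 / a), integral_const_mul]
    calc 1 / a * ∫ x in Icc 0 a, (K.choose j : ℝ) * x ^ j * (1 - x) ^ (K - j)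
        ≤ 1 / a * (1 / (K + 1)) := by
          gcongr
          exact setIntegral_Icc_choose_mul_pow_mul_one_sub_pow_le K j ha1
      _ = 1 / ((K + 1) * a) := by field_simp
  have hfloor : {ω | (N ω : ℝ) ≤ K * a * θ} = {ω | N ω ≤ ⌊(K : ℝ) * a * θ⌋₊} := by
    ext ω; exact (Nat.le_floor_iff hKaθ).symm
  refine ⟨ENNReal.toReal_le_of_le_ofReal (by positivity) ?_, by gcongr; exact Nat.floor_le hKaθ⟩
  rw [hfloor]
  refine (measure_le_natCast_add_one_mul μ hatom _).trans_eq ?_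
  rw [div_eq_mul_one_div ((⌊(K : ℝ) * a * θ⌋₊ : ℝ) + 1), ENNReal.ofReal_mul (by positivity),
    ENNReal.ofReal_add (by positivity) zero_le_one, ENNReal.ofReal_natCast, ENNReal.ofReal_one]

/-- Binomial count with uniform success probability on `[0,a]`: if `p` is uniform on
`[0,a]` (`0 < a ≤ 1`) and, conditionally on `p`, `N ∼ Binomial(K,p)` (encoded through
the joint law of `(N, p)`), then for `θ ∈ [0,1]`,
`P(N ≤ K·a·θ) ≤ (⌊K·a·θ⌋+1)/((K+1)·a) ≤ (K·a·θ+1)/((K+1)·a)`. -/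
theorem stmt_13 {Ω : Type*} [MeasurableSpace Ω] (μ : Measure Ω) [IsProbabilityMeasure μ]
    (K : ℕ) (hK : 1 ≤ K) (a : ℝ) (ha : 0 < a) (ha1 : a ≤ 1)
    (p : Ω → ℝ) (N : Ω → ℕ) (hp : Measurable p) (hN : Measurable N)
    (hjoint : ∀ (j : ℕ) (s : Set ℝ), MeasurableSet s →
      μ {ω | N ω = j ∧ p ω ∈ s}
        = ENNReal.ofReal
            (∫ t in s ∩ Set.Icc (0 : ℝ) a,
              (1 / a) * (Nat.choose K j : ℝ) * t ^ j * (1 - t) ^ (K - j)))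
    (θ : ℝ) (hθ : θ ∈ Set.Icc (0 : ℝ) 1) :
    (μ {ω | (N ω : ℝ) ≤ (K : ℝ) * a * θ}).toReal
        ≤ ((Nat.floor ((K : ℝ) * a * θ) : ℝ) + 1) / (((K : ℝ) + 1) * a) ∧
      ((Nat.floor ((K : ℝ) * a * θ) : ℝ) + 1) / (((K : ℝ) + 1) * a)
        ≤ ((K : ℝ) * a * θ + 1) / (((K : ℝ) + 1) * a) :=
  stmt_13_general μ K a ha ha1 p N hjoint θ hθ
end
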